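/- arXiv:2411.07846 — 4 statements merged into one kernel-verified Lean document; each statement's English description precedes it below -/
import Mathlib

section
/- The functions a(t) = 3/|t-t0|, b(t) = 30/|t-t0|^3, c(t) = 120/|t-t0|^5 satisfy the BKL constraint (ln a)'(ln b)' + (ln a)'(ln c)' + (ln b)'(ln c)' = a² + b/a + c/b for all t ≠ t0. -/
open Real

theorem hasDerivAt_log_div_abs_sub_pow {k : ℝ} (hk : k ≠ 0) (n : ℕ) {t0 t : ℝ} (ht : t ≠ t0) :
    HasDerivAt (fun s => log (k / |s - t0| ^ n)) (-n / (t - t0)) t := by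
  have hlog : HasDerivAt (fun s => log k - n * log (s - t0)) (-(n * (1 / (t - t0)))) t :=
    ((((hasDerivAt_id' t).sub_const t0).log (sub_ne_zero.mpr ht)).const_mul _).const_sub _
  -- near `t` the function agrees with `log k - n log (s - t0)`, since `log |x| = log x`
  have heq : (fun s => log (k / |s - t0| ^ n)) =ᶠ[nhds t] fun s => log k - n * log (s - t0) := by
    filter_upwards [isOpen_ne.mem_nhds ht] with s hs
    rw [log_div hk (pow_ne_zero _ (abs_ne_zero.mpr (sub_ne_zero.mpr hs))), log_pow, log_abs]
  exact (hlog.congr_of_eventuallyEq heq).congr_deriv (by ring)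

/-- The exact BKL solution satisfies the BKL constraint
`(ln a)'(ln b)' + (ln a)'(ln c)' + (ln b)'(ln c)' = a² + b/a + c/b` for all `t ≠ t0`. -/
theorem bkl_exact_solution_constraint (t0 : ℝ)
    (a b c : ℝ → ℝ)
    (ha : ∀ t, a t = 3 / |t - t0|)
    (hb : ∀ t, b t = 30 / |t - t0| ^ 3)
    (hc : ∀ t, c t = 120 / |t - t0| ^ 5) :
    ∀ t ≠ t0,
      deriv (fun s => Real.log (a s)) t * deriv (fun s => Real.log (b s)) t +
      deriv (fun s => Real.log (a s)) t * deriv (fun s => Real.log (c s)) t +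
      deriv (fun s => Real.log (b s)) t * deriv (fun s => Real.log (c s)) t =
      (a t) ^ 2 + b t / a t + c t / b t := by
  intro t ht
  have da : deriv (fun s => log (a s)) t = -1 / (t - t0) := by
    simpa [ha] using (hasDerivAt_log_div_abs_sub_pow (k := 3) (by norm_num) 1 ht).deriv
  have db : deriv (fun s => log (b s)) t = -3 / (t - t0) := by
    simpa [hb] using (hasDerivAt_log_div_abs_sub_pow (k := 30) (by norm_num) 3 ht).deriv
  have dc : deriv (fun s => log (c s)) t = -5 / (t - t0) := by
    simpa [hc] using (hasDerivAt_log_div_abs_sub_pow (k := 120) (by norm_num) 5 ht).deriv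
  have hτ : t - t0 ≠ 0 := sub_ne_zero.mpr ht
  have habs : |t - t0| ≠ 0 := abs_ne_zero.mpr hτ
  -- both sides equal `23 / (t - t0) ^ 2`
  rw [da, db, dc, ha, hb, hc]
  field_simp
  linear_combination 2070 * sq_abs (t - t0)
end

section
/- If (a,b,c) are positive smooth solutions of the first two BKL equations and the constraint, and (ln a)' + (ln b)' ≠ 0 everywhere, then the third BKL equation holds automatically. -/
/-- Dependence of the BKL equations: positive smooth solutions of the first two BKL
equations and the constraint, with `(ln a)' + (ln b)' ≠ 0`, automatically satisfy the
third BKL equation. -/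
theorem bkl_third_equation_dependent (x y : ℝ) (a b c : ℝ → ℝ)
    (ha : ContDiffOn ℝ (⊤ : ℕ∞) a (Set.Ioo x y))
    (hb : ContDiffOn ℝ (⊤ : ℕ∞) b (Set.Ioo x y))
    (hc : ContDiffOn ℝ (⊤ : ℕ∞) c (Set.Ioo x y))
    (hapos : ∀ t ∈ Set.Ioo x y, 0 < a t)
    (hbpos : ∀ t ∈ Set.Ioo x y, 0 < b t)
    (hcpos : ∀ t ∈ Set.Ioo x y, 0 < c t)
    (heq1 : ∀ t ∈ Set.Ioo x y,
      deriv (deriv (fun s => Real.log (a s))) t = b t / a t - (a t) ^ 2)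
    (heq2 : ∀ t ∈ Set.Ioo x y,
      deriv (deriv (fun s => Real.log (b s))) t = (a t) ^ 2 - b t / a t + c t / b t)
    (hcons : ∀ t ∈ Set.Ioo x y,
      deriv (fun s => Real.log (a s)) t * deriv (fun s => Real.log (b s)) t +
      deriv (fun s => Real.log (a s)) t * deriv (fun s => Real.log (c s)) t +
      deriv (fun s => Real.log (b s)) t * deriv (fun s => Real.log (c s)) t =
      (a t) ^ 2 + b t / a t + c t / b t)
    (hne : ∀ t ∈ Set.Ioo x y,
      deriv (fun s => Real.log (a s)) t + deriv (fun s => Real.log (b s)) t ≠ 0) :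
    ∀ t ∈ Set.Ioo x y,
      deriv (deriv (fun s => Real.log (c s))) t = (a t) ^ 2 - c t / b t := by

  intro t ht
  have hopen : IsOpen (Set.Ioo x y) := isOpen_Ioo
  have hmem : Set.Ioo x y ∈ nhds t := hopen.mem_nhds ht
  have hane : a t ≠ 0 := (hapos t ht).ne'
  have hbne : b t ≠ 0 := (hbpos t ht).ne'
  have hcne : c t ≠ 0 := (hcpos t ht).ne'
  have hA : ContDiffOn ℝ (⊤ : ℕ∞) (fun s => Real.log (a s)) (Set.Ioo x y) :=
    ha.log fun s hs => (hapos s hs).ne'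
  have hB : ContDiffOn ℝ (⊤ : ℕ∞) (fun s => Real.log (b s)) (Set.Ioo x y) :=
    hb.log fun s hs => (hbpos s hs).ne'
  have hC : ContDiffOn ℝ (⊤ : ℕ∞) (fun s => Real.log (c s)) (Set.Ioo x y) :=
    hc.log fun s hs => (hcpos s hs).ne'
  set α := deriv (fun s => Real.log (a s)) with hαdef
  set β := deriv (fun s => Real.log (b s)) with hβdef
  set γ := deriv (fun s => Real.log (c s)) with hγdef
  have hαc : ContDiffOn ℝ (⊤ : ℕ∞) α (Set.Ioo x y) := hA.deriv_of_isOpen hopen (by simp)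
  have hβc : ContDiffOn ℝ (⊤ : ℕ∞) β (Set.Ioo x y) := hB.deriv_of_isOpen hopen (by simp)
  have hγc : ContDiffOn ℝ (⊤ : ℕ∞) γ (Set.Ioo x y) := hC.deriv_of_isOpen hopen (by simp)
  have hαdiff : DifferentiableAt ℝ α t :=
    (hαc.differentiableOn (by simp)).differentiableAt hmem
  have hβdiff : DifferentiableAt ℝ β t :=
    (hβc.differentiableOn (by simp)).differentiableAt hmem
  have hγdiff : DifferentiableAt ℝ γ t :=
    (hγc.differentiableOn (by simp)).differentiableAt hmem
  have hadiff : DifferentiableAt ℝ a t := (ha.differentiableOn (by simp)).differentiableAt hmem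
  have hbdiff : DifferentiableAt ℝ b t := (hb.differentiableOn (by simp)).differentiableAt hmem
  have hcdiff : DifferentiableAt ℝ c t := (hc.differentiableOn (by simp)).differentiableAt hmem
  have hada : HasDerivAt a (deriv a t) t := hadiff.hasDerivAt
  have hbda : HasDerivAt b (deriv b t) t := hbdiff.hasDerivAt
  have hcda : HasDerivAt c (deriv c t) t := hcdiff.hasDerivAt
  have hαt : α t = deriv a t / a t := (hada.log hane).deriv
  have hβt : β t = deriv b t / b t := (hbda.log hbne).deriv
  have hγt : γ t = deriv c t / c t := (hcda.log hcne).deriv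
  have hLR : (fun s => α s * β s + α s * γ s + β s * γ s)
      =ᶠ[nhds t] (fun s => a s ^ 2 + b s / a s + c s / b s) := by
    filter_upwards [hmem] with s hs using hcons s hs
  have hdL : HasDerivAt (fun s => α s * β s + α s * γ s + β s * γ s)
      (deriv α t * β t + α t * deriv β t + (deriv α t * γ t + α t * deriv γ t)
        + (deriv β t * γ t + β t * deriv γ t)) t :=
    ((hαdiff.hasDerivAt.mul hβdiff.hasDerivAt).add
      (hαdiff.hasDerivAt.mul hγdiff.hasDerivAt)).add
      (hβdiff.hasDerivAt.mul hγdiff.hasDerivAt)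
  have hdR : HasDerivAt (fun s => a s ^ 2 + b s / a s + c s / b s)
      (((2 : ℕ) : ℝ) * a t ^ (2 - 1) * deriv a t
        + (deriv b t * a t - b t * deriv a t) / a t ^ 2
        + (deriv c t * b t - c t * deriv b t) / b t ^ 2) t :=
    ((hada.pow 2).add (hbda.div hada hane)).add (hcda.div hbda hbne)
  have hE : deriv α t * β t + α t * deriv β t + (deriv α t * γ t + α t * deriv γ t)
        + (deriv β t * γ t + β t * deriv γ t)
      = ((2 : ℕ) : ℝ) * a t ^ (2 - 1) * deriv a t
        + (deriv b t * a t - b t * deriv a t) / a t ^ 2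
        + (deriv c t * b t - c t * deriv b t) / b t ^ 2 := by
    rw [← hdL.deriv, ← hdR.deriv]
    exact hLR.deriv_eq
  have h1 := heq1 t ht
  have h2 := heq2 t ht
  have hne' : α t + β t ≠ 0 := hne t ht
  rw [h1, h2] at hE
  rw [hαt, hβt, hγt] at hE
  rw [hαt, hβt] at hne'
  show deriv γ t = a t ^ 2 - c t / b t
  have hne2 : deriv a t * b t + deriv b t * a t ≠ 0 := by
    intro h0
    apply hne'
    have : deriv a t / a t + deriv b t / b t
        = (deriv a t * b t + deriv b t * a t) / (a t * b t) := by
      field_simp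
    rw [this, h0, zero_div]
  have key2 : (deriv γ t * b t - (a t ^ 2 * b t - c t)) * (deriv a t * b t + deriv b t * a t)
      * (a t ^ 7 * b t ^ 4 * c t ^ 2) = 0 := by
    field_simp at hE
    linear_combination (a t ^ 6 * b t ^ 4 * c t) * hE
  have hmono : a t ^ 7 * b t ^ 4 * c t ^ 2 ≠ 0 := by positivity
  have key : (deriv γ t * b t - (a t ^ 2 * b t - c t)) * (deriv a t * b t + deriv b t * a t) = 0 :=
    (mul_eq_zero.mp key2).resolve_right hmono
  rcases mul_eq_zero.mp key with h | h
  · have : deriv γ t * b t = a t ^ 2 * b t - c t := by linarith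
    field_simp
    linarith
  · exact absurd h hne2
end

section
/- There are no real numbers γ1, γ2, γ3 with γ3 < 0 such that a solution of the y-system with ẏi → γi, yi → -∞ for i=1,2 exists; i.e., if ÿ1 + ÿ2 = e^{y3}, ẏ1 → 0, ẏ2 → 0, ẏ3 → γ3 < 0, then it is impossible that y1 + y2 → -∞. -/
/-!
Put `u = y₁ + y₂`, so `ü = exp y₃`. As `ẏ₃ → γ₃ < 0`, there are `c < 0` and `T` with `ẏ₃ ≤ c`
on `[T, ∞)`, hence `ü ≤ A e^{ct}` there. Since `u̇ - (A / c) e^{ct}` is antitone and tends to `0`,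
`u̇ ≥ (A / c) e^{ct}`; then `u - (A / c²) e^{ct}` is monotone, so `u ≥ u(T) - (A / c²) e^{cT}`
on `[T, ∞)` and `u` cannot tend to `-∞`.
-/

open Real Filter Set Topology

lemma monotoneOn_sub_of_hasDerivAt_le {f g f' g' : ℝ → ℝ} {s : Set ℝ} (hs : Convex ℝ s)
    (hf : ∀ t ∈ s, HasDerivAt f (f' t) t) (hg : ∀ t ∈ s, HasDerivAt g (g' t) t)
    (hle : ∀ t ∈ s, f' t ≤ g' t) : MonotoneOn (fun t => g t - f t) s :=
  monotoneOn_of_hasDerivWithinAt_nonneg hs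
    (fun t ht => ((hg t ht).sub (hf t ht)).continuousAt.continuousWithinAt)
    (fun t ht => ((hg t (interior_subset ht)).sub (hf t (interior_subset ht))).hasDerivWithinAt)
    (fun t ht => sub_nonneg.2 (hle t (interior_subset ht)))

lemma le_of_hasDerivAt_le_of_tendsto_sub {f g f' g' : ℝ → ℝ} {T : ℝ}
    (hf : ∀ t ∈ Ici T, HasDerivAt f (f' t) t) (hg : ∀ t ∈ Ici T, HasDerivAt g (g' t) t)
    (hle : ∀ t ∈ Ici T, f' t ≤ g' t) (hlim : Tendsto (fun t => g t - f t) atTop (𝓝 0)) :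
    ∀ t ∈ Ici T, g t ≤ f t := by
  intro t ht
  have hmono := monotoneOn_sub_of_hasDerivAt_le (convex_Ici T) hf hg hle
  have : g t - f t ≤ 0 :=
    ge_of_tendsto hlim <| eventually_atTop.2
      ⟨t, fun s hs => hmono ht (mem_Ici.2 (le_trans (mem_Ici.1 ht) hs)) hs⟩
  linarith

lemma hasDerivAt_const_mul_exp_mul (K c t : ℝ) :
    HasDerivAt (fun t => K * exp (c * t)) (K * c * exp (c * t)) t := by
  simpa [mul_comm, mul_left_comm, mul_assoc] using
    (((hasDerivAt_id t).const_mul c).exp).const_mul K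

lemma not_tendsto_atBot_of_hasDerivAt_le_exp {u v w : ℝ → ℝ} {A c T : ℝ} (hA : 0 ≤ A)
    (hc : c < 0) (hu : ∀ t ∈ Ici T, HasDerivAt u (v t) t)
    (hv : ∀ t ∈ Ici T, HasDerivAt v (w t) t) (hw : ∀ t ∈ Ici T, w t ≤ A * exp (c * t))
    (hv_lim : Tendsto v atTop (𝓝 0)) : ¬Tendsto u atTop atBot := by
  have hc0 : c ≠ 0 := hc.ne
  have hexp_lim : Tendsto (fun t => exp (c * t)) atTop (𝓝 0) :=
    tendsto_exp_atBot.comp (tendsto_id.const_mul_atTop_of_neg hc)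
  have hv_low : ∀ t ∈ Ici T, A / c * exp (c * t) ≤ v t := by
    refine le_of_hasDerivAt_le_of_tendsto_sub hv (fun t _ => hasDerivAt_const_mul_exp_mul _ c t)
      (fun t ht => ?_) ?_
    · rw [div_mul_cancel₀ A hc0]
      exact hw t ht
    · simpa using (hexp_lim.const_mul (A / c)).sub hv_lim
  have hu_low : ∀ t ∈ Ici T, u T - A / c ^ 2 * exp (c * T) ≤ u t := by
    intro t ht
    have hcoef : A / c ^ 2 * c = A / c := by field_simp
    have hmono := monotoneOn_sub_of_hasDerivAt_le (convex_Ici T)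
      (fun t _ => hasDerivAt_const_mul_exp_mul (A / c ^ 2) c t) hu
      (fun t ht => hcoef ▸ hv_low t ht) self_mem_Ici ht ht
    have : 0 ≤ A / c ^ 2 * exp (c * t) := by positivity
    dsimp only at hmono
    linarith
  intro hbot
  obtain ⟨t, hlt, ht⟩ :=
    ((hbot.eventually (eventually_lt_atBot (u T - A / c ^ 2 * exp (c * T)))).and
      (eventually_ge_atTop T)).exists
  exact (hu_low t ht).not_gt hlt

/-- Impossibility of `γ3 < 0`: if `ÿ1 + ÿ2 = exp(y3)`, `ẏ1 → 0`, `ẏ2 → 0`,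
`ẏ3 → γ3 < 0`, then it is impossible that `y1 + y2 → -∞`. -/
theorem bkl_gamma3_neg_impossible (y1 y2 y3 : ℝ → ℝ) (γ3 : ℝ)
    (hy1 : ContDiff ℝ 2 y1) (hy2 : ContDiff ℝ 2 y2) (hy3 : ContDiff ℝ 2 y3)
    (heq : ∀ t ∈ Set.Ici (0:ℝ),
      deriv (deriv y1) t + deriv (deriv y2) t = Real.exp (y3 t))
    (hd1 : Filter.Tendsto (deriv y1) Filter.atTop (nhds 0))
    (hd2 : Filter.Tendsto (deriv y2) Filter.atTop (nhds 0))
    (hd3 : Filter.Tendsto (deriv y3) Filter.atTop (nhds γ3))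
    (hγ3 : γ3 < 0)
    (hbot : Filter.Tendsto (fun t => y1 t + y2 t) Filter.atTop Filter.atBot) :
    False := by
  obtain ⟨c, hγc, hc⟩ := exists_between hγ3
  obtain ⟨T, hT⟩ := ((hd3.eventually (ge_mem_nhds hγc)).and
    (eventually_ge_atTop 0)).exists_forall_of_atTop
  have hy3_lin : ∀ t ∈ Ici T, y3 t - y3 T ≤ c * (t - T) := fun t ht =>
    (convex_Ici T).image_sub_le_mul_sub_of_deriv_le hy3.continuous.continuousOn
      (hy3.differentiable two_ne_zero).differentiableOn
      (fun s hs => (hT s (interior_subset hs)).1) T self_mem_Ici t ht ht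
  have hv : ∀ t ∈ Ici T, HasDerivAt (fun t => deriv y1 t + deriv y2 t) (exp (y3 t)) t :=
    fun t ht => heq t (hT t ht).2 ▸
      (hy1.differentiable_deriv_two t).hasDerivAt.add (hy2.differentiable_deriv_two t).hasDerivAt
  have hw : ∀ t ∈ Ici T, exp (y3 t) ≤ exp (y3 T - c * T) * exp (c * t) := fun t ht => by
    rw [← exp_add, exp_le_exp]
    linarith [hy3_lin t ht]
  exact not_tendsto_atBot_of_hasDerivAt_le_exp (exp_pos _).le hc
    (fun t _ => (hy1.differentiable two_ne_zero t).hasDerivAt.add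
      (hy2.differentiable two_ne_zero t).hasDerivAt)
    hv hw (by simpa using hd1.add hd2) hbot
end

section
/- The functions u1(t) = (1/3)ln(10800/|t-t0|⁹), u2(t) = (1/2)ln(40/|t-t0|⁴), u3(t) = (1/6)ln(5/2) satisfy the diagonalized BKL equations ü1 = (1/3)e^{2(u1-u2-u3)}, ü2 = e^{2(u1-u2-u3)} - e^{u2}cosh(3u3), ü3 = (1/3)e^{2(u1-u2-u3)} - e^{u2}sinh(3u3), and the constraint 3u̇1² - u̇2² - 3u̇3² = e^{2(u1-u2-u3)} + 2e^{u2}cosh(3u3), for all t ≠ t0. -/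
/-!
Away from `t0`, `u1` and `u2` are affine in `log |t - t0|` with slopes `-3` and `-2`, and `u3` is
constant. Hence every exponential in the system is a constant multiple of `(t - t0)⁻²`:
`e^{2(u1-u2-u3)} = 9/(t-t0)²` and `e^{u2 ± 3u3} = 10/(t-t0)², 4/(t-t0)²`, so
`e^{u2} cosh 3u3 = 7/(t-t0)²` and `e^{u2} sinh 3u3 = 3/(t-t0)²`, while `ü1 = 3/(t-t0)²`,
`ü2 = 2/(t-t0)²`, `u̇1 = -3/(t-t0)`, `u̇2 = -2/(t-t0)`.
-/

open Real Topology

-- Also at `x = t0`, by the junk values `log 0 = 0` and `deriv log 0 = 0⁻¹ = 0`.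
theorem deriv_const_add_mul_log_sub (c a t0 : ℝ) :
    deriv (fun x => c + a * log (x - t0)) = fun x => a * (x - t0)⁻¹ := by
  funext x
  rw [deriv_const_add, deriv_const_mul_field, deriv_comp_sub_const (f := log), deriv_log]

theorem deriv_const_mul_inv_sub (a t0 : ℝ) :
    deriv (fun x => a * (x - t0)⁻¹) = fun x => -a * ((x - t0) ^ 2)⁻¹ := by
  funext x
  rw [deriv_const_mul_field, deriv_comp_sub_const (f := fun y => y⁻¹), deriv_inv, mul_neg,
    neg_mul]

theorem deriv_eq_and_deriv_deriv_eq_of_eq_log {u : ℝ → ℝ} {c a t0 t : ℝ}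
    (hu : ∀ x ≠ t0, u x = c + a * log (x - t0)) (ht : t ≠ t0) :
    deriv u t = a * (t - t0)⁻¹ ∧ deriv (deriv u) t = -a * ((t - t0) ^ 2)⁻¹ := by
  have h : u =ᶠ[𝓝 t] fun x => c + a * log (x - t0) :=
    (eventually_ne_nhds ht).mono hu
  constructor
  · rw [h.deriv_eq, deriv_const_add_mul_log_sub]
  · rw [h.deriv.deriv_eq, deriv_const_add_mul_log_sub, deriv_const_mul_inv_sub]

theorem log_div_abs_sub_pow {c : ℝ} (n : ℕ) (hc : c ≠ 0) {x t0 : ℝ} (hx : x ≠ t0) :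
    log (c / |x - t0| ^ n) = log c - n * log (x - t0) := by
  rw [log_div hc (pow_ne_zero _ (abs_ne_zero.mpr (sub_ne_zero.mpr hx))), log_pow, log_abs]

theorem exp_log_sub_two_mul_log {k : ℝ} (hk : 0 < k) {y : ℝ} (hy : y ≠ 0) :
    exp (log k - 2 * log y) = k / y ^ 2 := by
  rw [exp_sub, exp_log hk, mul_comm, exp_mul, exp_log_eq_abs hy, rpow_two, sq_abs]

theorem exp_mul_cosh (x y : ℝ) : exp x * cosh y = (exp (x + y) + exp (x - y)) / 2 := by
  rw [cosh_eq, exp_add, exp_sub, exp_neg]; ring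

theorem exp_mul_sinh (x y : ℝ) : exp x * sinh y = (exp (x + y) - exp (x - y)) / 2 := by
  rw [sinh_eq, exp_add, exp_sub, exp_neg]; ring

theorem two_mul_log_10800 : 2 * log 10800 = 3 * log 40 + log (5/2) + 3 * log 9 := by
  have h := congrArg log (by norm_num : (10800:ℝ) ^ 2 = 40 ^ 3 * (5/2) * 9 ^ 3)
  rwa [log_mul (by norm_num) (by norm_num), log_mul (by norm_num) (by norm_num),
    log_pow, log_pow, log_pow, Nat.cast_ofNat, Nat.cast_ofNat] at h

theorem log_40_add_log_five_halves : log 40 + log (5/2) = 2 * log 10 := by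
  rw [← log_mul (by norm_num) (by norm_num), show (40:ℝ) * (5/2) = 10 ^ 2 by norm_num,
    log_pow, Nat.cast_ofNat]

theorem log_40_sub_log_five_halves : log 40 - log (5/2) = 2 * log 4 := by
  rw [← log_div (by norm_num) (by norm_num), show (40:ℝ) / (5/2) = 4 ^ 2 by norm_num,
    log_pow, Nat.cast_ofNat]

/-- The exact solution in the diagonal variables:
`u1 = (1/3)ln(10800/|t-t0|⁹)`, `u2 = (1/2)ln(40/|t-t0|⁴)`, `u3 = (1/6)ln(5/2)`
satisfies the diagonalised BKL equations and the constraint for all `t ≠ t0`. -/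
theorem bkl_exact_solution_diagonal (t0 : ℝ) (u1 u2 u3 : ℝ → ℝ)
    (hu1 : ∀ t, u1 t = (1/3) * Real.log (10800 / |t - t0| ^ 9))
    (hu2 : ∀ t, u2 t = (1/2) * Real.log (40 / |t - t0| ^ 4))
    (hu3 : ∀ t, u3 t = (1/6) * Real.log (5/2)) :
    ∀ t ≠ t0,
      deriv (deriv u1) t = (1/3) * Real.exp (2 * (u1 t - u2 t - u3 t)) ∧
      deriv (deriv u2) t =
        Real.exp (2 * (u1 t - u2 t - u3 t)) - Real.exp (u2 t) * Real.cosh (3 * u3 t) ∧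
      deriv (deriv u3) t =
        (1/3) * Real.exp (2 * (u1 t - u2 t - u3 t)) - Real.exp (u2 t) * Real.sinh (3 * u3 t) ∧
      3 * (deriv u1 t) ^ 2 - (deriv u2 t) ^ 2 - 3 * (deriv u3 t) ^ 2 =
        Real.exp (2 * (u1 t - u2 t - u3 t)) + 2 * Real.exp (u2 t) * Real.cosh (3 * u3 t) := by
  intro t ht
  have hu1' : ∀ x ≠ t0, u1 x = (1/3) * log 10800 + (-3) * log (x - t0) := fun x hx => by
    rw [hu1, log_div_abs_sub_pow 9 (by norm_num) hx]; push_cast; ring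
  have hu2' : ∀ x ≠ t0, u2 x = (1/2) * log 40 + (-2) * log (x - t0) := fun x hx => by
    rw [hu2, log_div_abs_sub_pow 4 (by norm_num) hx]; push_cast; ring
  obtain ⟨d1, dd1⟩ := deriv_eq_and_deriv_deriv_eq_of_eq_log hu1' ht
  obtain ⟨d2, dd2⟩ := deriv_eq_and_deriv_deriv_eq_of_eq_log hu2' ht
  have d3 : deriv u3 = fun _ => 0 := by
    rw [funext hu3]; exact deriv_const' _
  have hs : t - t0 ≠ 0 := sub_ne_zero.mpr ht
  have e9 : exp (2 * (u1 t - u2 t - u3 t)) = 9 / (t - t0) ^ 2 := by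
    rw [← exp_log_sub_two_mul_log (by norm_num) hs, hu1' t ht, hu2' t ht, hu3]
    congr 1; linarith [two_mul_log_10800]
  have e10 : exp (u2 t + 3 * u3 t) = 10 / (t - t0) ^ 2 := by
    rw [← exp_log_sub_two_mul_log (by norm_num) hs, hu2' t ht, hu3]
    congr 1; linarith [log_40_add_log_five_halves]
  have e4 : exp (u2 t - 3 * u3 t) = 4 / (t - t0) ^ 2 := by
    rw [← exp_log_sub_two_mul_log (by norm_num) hs, hu2' t ht, hu3]
    congr 1; linarith [log_40_sub_log_five_halves]
  refine ⟨?_, ?_, ?_, ?_⟩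
  · rw [dd1, e9]; field_simp; ring
  · rw [dd2, e9, exp_mul_cosh, e10, e4]; field_simp; ring
  · rw [d3, deriv_const, e9, exp_mul_sinh, e10, e4]; field_simp; ring
  · rw [d1, d2, d3, e9, mul_assoc 2, exp_mul_cosh, e10, e4]; field_simp; ring
end
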